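/- arXiv:2501.14941 — 2 statements merged into one kernel-verified Lean document; each statement's English description precedes it below -/
import Mathlib

section
/- Second-order variation of an entropy difference with a scaled component: let γ > 0 and for g : ℝ → ℝ write g_γ(x) := (1/γ)·g(x/γ). Let f₁, f₂ : ℝ → ℝ be continuous probability densities with f₂(x) > 0 and (f₁ ⋆ (f₂)_γ)(x) > 0 for all x, with x ↦ f₂(x)·log(f₂(x)) and x ↦ (f₁ ⋆ (f₂)_γ)(x)·log((f₁ ⋆ (f₂)_γ)(x)) integrable, and let h₂ : ℝ → ℝ be continuous with compact support. Under domination hypotheses guaranteeing twice differentiation under the integral sign (there exist ε₀ > 0 and integrable Φ, Ψ with, for all x and |ε| ≤ ε₀: |(f₁ ⋆ (h₂)_γ)(x)|·(1 + |log((f₁ ⋆ (f₂ + ε·h₂)_γ)(x))|) + |h₂(x)|·(1 + |log(f₂(x) + ε·h₂(x))|) ≤ Φ(x) and (f₁ ⋆ (h₂)_γ)(x)²/(f₁ ⋆ (f₂ + ε·h₂)_γ)(x) + h₂(x)²/(f₂(x) + ε·h₂(x)) ≤ Ψ(x)), the second derivative at ε = 0 of the function ε ↦ [−∫ (f₁ ⋆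 (f₂ + ε·h₂)_γ)(x)·log((f₁ ⋆ (f₂ + ε·h₂)_γ)(x)) dx] − [−∫ (f₂(x) + ε·h₂(x))·log(f₂(x) + ε·h₂(x)) dx] equals ∫ ( h₂(x)²/f₂(x) − (f₁ ⋆ (h₂)_γ)(x)²/(f₁ ⋆ (f₂)_γ)(x) ) dx. -/
open MeasureTheory

/-- Convolution of two functions on ℝ (with respect to Lebesgue measure). -/
noncomputable def conv (p q : ℝ → ℝ) : ℝ → ℝ :=
  fun x => ∫ t : ℝ, p t * q (x - t)

/-- The `γ`-scaling of a function: `g_γ(x) = (1/γ)·g(x/γ)`. -/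
noncomputable def scaleFn (γ : ℝ) (g : ℝ → ℝ) : ℝ → ℝ :=
  fun x => (1 / γ) * g (x / γ)

/-!
Both entropies are integrals of `u ↦ u log u` along an affine path `ε ↦ p + εq` (for the
channel output this uses linearity of `g ↦ f₁ ⋆ g_γ`). Pointwise, `d/dε = q (log (p + εq) + 1)`
and `d²/dε² = q² / (p + εq)`, and the two domination hypotheses are exactly what is needed to
differentiate twice under the integral sign. They also keep `p + εq` positive: a path that
reached `0` would make `|log (p + εq)|` unbounded.
-/

open Metric Filter Topology

lemma add_mul_pos_of_abs_log_le {p q C ε₀ : ℝ} (hp : 0 < p)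
    (hC : ∀ ε : ℝ, |ε| ≤ ε₀ → |q| * (1 + |Real.log (p + ε * q)|) ≤ C)
    {ε : ℝ} (hε : |ε| ≤ ε₀) : 0 < p + ε * q := by
  by_contra! hneg
  have hq : 0 < |q| := abs_pos.mpr fun hq => by simp [hq] at hneg; linarith
  obtain ⟨v, hlogv, hv0, hvp⟩ : ∃ v, Real.log v < -(C / |q|) ∧ 0 < v ∧ v < p :=
    ((Real.tendsto_log_nhdsGT_zero.eventually (eventually_lt_atBot _)).and
      (Ioo_mem_nhdsGT hp)).exists
  have hε' : |(v - p) / q| ≤ ε₀ := by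
    have hεq : p ≤ |ε| * |q| := by
      rw [← abs_mul]; linarith [neg_abs_le (ε * q)]
    rw [abs_div, div_le_iff₀ hq, abs_of_neg (by linarith : v - p < 0)]
    nlinarith
  have hbound := hC _ hε'
  rw [div_mul_cancel₀ _ (abs_pos.mp hq), add_sub_cancel] at hbound
  have : C < |q| * |Real.log v| := by
    rw [← div_lt_iff₀' hq]; linarith [neg_abs_le (Real.log v)]
  linarith

lemma hasDerivAt_mul_log_add_mul {p q ε : ℝ} (h : p + ε * q ≠ 0) :
    HasDerivAt (fun s => (p + s * q) * Real.log (p + s * q))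
      (q * (Real.log (p + ε * q) + 1)) ε := by
  have hu : HasDerivAt (fun s : ℝ => p + s * q) q ε := by
    simpa using ((hasDerivAt_id ε).mul_const q).const_add p
  exact ((Real.hasDerivAt_mul_log h).comp ε hu).congr_deriv (mul_comm _ _)

lemma hasDerivAt_mul_log_add_mul_add_one {p q ε : ℝ} (h : p + ε * q ≠ 0) :
    HasDerivAt (fun s => q * (Real.log (p + s * q) + 1)) (q ^ 2 / (p + ε * q)) ε := by
  have hu : HasDerivAt (fun s : ℝ => p + s * q) q ε := by
    simpa using ((hasDerivAt_id ε).mul_const q).const_add p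
  refine ((((Real.hasDerivAt_log h).comp ε hu).add_const 1).const_mul q).congr_deriv ?_
  field_simp

lemma abs_mul_add_one_le (q L : ℝ) : |q * (L + 1)| ≤ |q| * (1 + |L|) := by
  rw [abs_mul]; gcongr; exact (abs_add_le _ _).trans (by simp [add_comm])

section ParametricIntegral

variable {α E : Type*} [MeasurableSpace α] {μ : Measure α}
  [NormedAddCommGroup E] [NormedSpace ℝ E] {F F' : ℝ → α → E} {Φ : α → ℝ} {s : Set ℝ}

lemma integrable_of_hasDerivAt_of_norm_le (hs : Convex ℝ s) {x₀ x : ℝ} (hx₀ : x₀ ∈ s)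
    (hx : x ∈ s) (hF_meas : AEStronglyMeasurable (F x) μ) (hF₀ : Integrable (F x₀) μ)
    (hΦ : Integrable Φ μ) (h_bound : ∀ᵐ a ∂μ, ∀ y ∈ s, ‖F' y a‖ ≤ Φ a)
    (h_diff : ∀ᵐ a ∂μ, ∀ y ∈ s, HasDerivAt (F · a) (F' y a) y) :
    Integrable (F x) μ := by
  have hsub : Integrable (fun a => F x a - F x₀ a) μ := by
    refine (hΦ.mul_const ‖x - x₀‖).mono' (hF_meas.sub hF₀.1) ?_
    filter_upwards [h_bound, h_diff] with a hb hd
    exact hs.norm_image_sub_le_of_norm_hasDerivWithin_le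
      (fun y hy => (hd y hy).hasDerivWithinAt) hb hx₀ hx
  exact (hsub.add hF₀).congr (ae_of_all _ fun a => sub_add_cancel _ _)

lemma hasDerivAt_integral_of_isOpen_of_convex (hs_open : IsOpen s) (hs : Convex ℝ s)
    {x₀ : ℝ} (hx₀ : x₀ ∈ s) (hF_meas : ∀ x, AEStronglyMeasurable (F x) μ)
    (hF'_meas : ∀ x, AEStronglyMeasurable (F' x) μ) (hF₀ : Integrable (F x₀) μ)
    (hΦ : Integrable Φ μ) (h_bound : ∀ᵐ a ∂μ, ∀ y ∈ s, ‖F' y a‖ ≤ Φ a)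
    (h_diff : ∀ᵐ a ∂μ, ∀ y ∈ s, HasDerivAt (F · a) (F' y a) y) {x : ℝ} (hx : x ∈ s) :
    HasDerivAt (fun y => ∫ a, F y a ∂μ) (∫ a, F' x a ∂μ) x :=
  (hasDerivAt_integral_of_dominated_loc_of_deriv_le (hs_open.mem_nhds hx)
    (Eventually.of_forall hF_meas)
    (integrable_of_hasDerivAt_of_norm_le hs hx₀ hx (hF_meas x) hF₀ hΦ h_bound h_diff)
    (hF'_meas x) h_bound hΦ h_diff).2

end ParametricIntegral

lemma iteratedDeriv_two_eq_of_hasDerivAt {f D : ℝ → ℝ} {x c : ℝ}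
    (hf : ∀ᶠ y in 𝓝 x, HasDerivAt f (D y) y) (hD : HasDerivAt D c x) :
    iteratedDeriv 2 f x = c := by
  rw [iteratedDeriv_succ, iteratedDeriv_one]
  exact (hD.congr_of_eventuallyEq (hf.mono fun y hy => hy.deriv)).deriv

section MulLogIntegral

variable {α : Type*} [MeasurableSpace α] {μ : Measure α} {p q Φ Ψ : α → ℝ} {ε₀ : ℝ}

lemma hasDerivAt_integral_mul_log_add_mul (hp : AEStronglyMeasurable p μ)
    (hq : AEStronglyMeasurable q μ) (hplog : Integrable (fun a => p a * Real.log (p a)) μ)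
    (hΦ : Integrable Φ μ) (hpos : ∀ a ε, |ε| ≤ ε₀ → 0 < p a + ε * q a)
    (hdom : ∀ a ε, |ε| ≤ ε₀ → |q a| * (1 + |Real.log (p a + ε * q a)|) ≤ Φ a)
    {ε : ℝ} (hε : ε ∈ ball 0 ε₀) :
    HasDerivAt (fun ε => ∫ a, (p a + ε * q a) * Real.log (p a + ε * q a) ∂μ)
      (∫ a, q a * (Real.log (p a + ε * q a) + 1) ∂μ) ε := by
  have hpath : ∀ y : ℝ, AEStronglyMeasurable (fun a => p a + y * q a) μ :=
    fun y => hp.add (hq.const_mul y)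
  exact hasDerivAt_integral_of_isOpen_of_convex isOpen_ball (convex_ball 0 ε₀)
    (mem_ball_self (pos_of_mem_ball hε))
    (fun y => (hpath y).mul (hpath y).aemeasurable.log.aestronglyMeasurable)
    (fun y => hq.mul ((hpath y).aemeasurable.log.aestronglyMeasurable.add_const 1))
    (by simp only [zero_mul, add_zero]; exact hplog) hΦ
    (Eventually.of_forall fun a y hy =>
      (abs_mul_add_one_le _ _).trans (hdom a y (mem_ball_zero_iff.mp hy).le))
    (Eventually.of_forall fun a y hy =>
      hasDerivAt_mul_log_add_mul (hpos a y (mem_ball_zero_iff.mp hy).le).ne') hε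

lemma hasDerivAt_integral_mul_log_add_mul_add_one (hε₀ : 0 < ε₀)
    (hp : AEStronglyMeasurable p μ) (hq : AEStronglyMeasurable q μ)
    (hΦ : Integrable Φ μ) (hΨ : Integrable Ψ μ) (hpos : ∀ a ε, |ε| ≤ ε₀ → 0 < p a + ε * q a)
    (hdom₁ : ∀ a ε, |ε| ≤ ε₀ → |q a| * (1 + |Real.log (p a + ε * q a)|) ≤ Φ a)
    (hdom₂ : ∀ a ε, |ε| ≤ ε₀ → q a ^ 2 / (p a + ε * q a) ≤ Ψ a) :
    Integrable (fun a => q a ^ 2 / p a) μ ∧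
      HasDerivAt (fun ε => ∫ a, q a * (Real.log (p a + ε * q a) + 1) ∂μ)
        (∫ a, q a ^ 2 / p a ∂μ) 0 := by
  have hpath : ∀ y : ℝ, AEStronglyMeasurable (fun a => p a + y * q a) μ :=
    fun y => hp.add (hq.const_mul y)
  have hF'_meas : ∀ y : ℝ,
      AEStronglyMeasurable (fun a => q a * (Real.log (p a + y * q a) + 1)) μ :=
    fun y => hq.mul ((hpath y).aemeasurable.log.aestronglyMeasurable.add_const 1)
  have hF'₀ : Integrable (fun a => q a * (Real.log (p a + 0 * q a) + 1)) μ :=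
    hΦ.mono' (hF'_meas 0) (Eventually.of_forall fun a =>
      (abs_mul_add_one_le _ _).trans (hdom₁ a 0 (by simpa using hε₀.le)))
  simpa using hasDerivAt_integral_of_dominated_loc_of_deriv_le (ball_mem_nhds 0 hε₀)
    (Eventually.of_forall hF'_meas) hF'₀
    (((hq.aemeasurable.pow_const 2).div (hpath 0).aemeasurable).aestronglyMeasurable)
    (Eventually.of_forall fun a y hy => by
      have hy : |y| ≤ ε₀ := (mem_ball_zero_iff.mp hy).le
      rw [Real.norm_eq_abs, abs_of_nonneg (div_nonneg (sq_nonneg _) (hpos a y hy).le)]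
      exact hdom₂ a y hy) hΨ
    (Eventually.of_forall fun a y hy =>
      hasDerivAt_mul_log_add_mul_add_one (hpos a y (mem_ball_zero_iff.mp hy).le).ne')

theorem iteratedDeriv_two_integral_mul_log_sub {p₁ q₁ p₂ q₂ : α → ℝ} (hε₀ : 0 < ε₀)
    (hp₁ : AEStronglyMeasurable p₁ μ) (hq₁ : AEStronglyMeasurable q₁ μ)
    (hp₂ : AEStronglyMeasurable p₂ μ) (hq₂ : AEStronglyMeasurable q₂ μ)
    (hpos₁ : ∀ a, 0 < p₁ a) (hpos₂ : ∀ a, 0 < p₂ a)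
    (hlog₁ : Integrable (fun a => p₁ a * Real.log (p₁ a)) μ)
    (hlog₂ : Integrable (fun a => p₂ a * Real.log (p₂ a)) μ)
    (hΦ : Integrable Φ μ) (hΨ : Integrable Ψ μ)
    (hdom₁ : ∀ a ε, |ε| ≤ ε₀ → |q₁ a| * (1 + |Real.log (p₁ a + ε * q₁ a)|) +
      |q₂ a| * (1 + |Real.log (p₂ a + ε * q₂ a)|) ≤ Φ a)
    (hdom₂ : ∀ a ε, |ε| ≤ ε₀ →
      q₁ a ^ 2 / (p₁ a + ε * q₁ a) + q₂ a ^ 2 / (p₂ a + ε * q₂ a) ≤ Ψ a) :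
    iteratedDeriv 2 (fun ε =>
        (-∫ a, (p₁ a + ε * q₁ a) * Real.log (p₁ a + ε * q₁ a) ∂μ) -
        -∫ a, (p₂ a + ε * q₂ a) * Real.log (p₂ a + ε * q₂ a) ∂μ) 0 =
      ∫ a, (q₂ a ^ 2 / p₂ a - q₁ a ^ 2 / p₁ a) ∂μ := by
  have hdom₁₁ a ε (hε : |ε| ≤ ε₀) := le_of_add_le_of_nonneg_left (hdom₁ a ε hε) (by positivity)
  have hdom₁₂ a ε (hε : |ε| ≤ ε₀) := le_of_add_le_of_nonneg_right (hdom₁ a ε hε) (by positivity)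
  have hpath₁ a ε (hε : |ε| ≤ ε₀) := add_mul_pos_of_abs_log_le (hpos₁ a) (hdom₁₁ a) hε
  have hpath₂ a ε (hε : |ε| ≤ ε₀) := add_mul_pos_of_abs_log_le (hpos₂ a) (hdom₁₂ a) hε
  have hdom₂₁ a ε (hε : |ε| ≤ ε₀) := le_of_add_le_of_nonneg_left (hdom₂ a ε hε)
    (div_nonneg (sq_nonneg _) (hpath₂ a ε hε).le)
  have hdom₂₂ a ε (hε : |ε| ≤ ε₀) := le_of_add_le_of_nonneg_right (hdom₂ a ε hε)
    (div_nonneg (sq_nonneg _) (hpath₁ a ε hε).le)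
  obtain ⟨hint₁, hD₁⟩ := hasDerivAt_integral_mul_log_add_mul_add_one hε₀ hp₁ hq₁ hΦ hΨ
    hpath₁ hdom₁₁ hdom₂₁
  obtain ⟨hint₂, hD₂⟩ := hasDerivAt_integral_mul_log_add_mul_add_one hε₀ hp₂ hq₂ hΦ hΨ
    hpath₂ hdom₁₂ hdom₂₂
  rw [integral_sub hint₂ hint₁]
  refine iteratedDeriv_two_eq_of_hasDerivAt ?_ ((hD₁.neg.sub hD₂.neg).congr_deriv (by ring))
  filter_upwards [ball_mem_nhds 0 hε₀] with ε hε
  exact (hasDerivAt_integral_mul_log_add_mul hp₁ hq₁ hlog₁ hΦ hpath₁ hdom₁₁ hε).neg.sub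
    (hasDerivAt_integral_mul_log_add_mul hp₂ hq₂ hlog₂ hΦ hpath₂ hdom₁₂ hε).neg

end MulLogIntegral

lemma scaleFn_add_mul (γ ε : ℝ) (f h : ℝ → ℝ) :
    scaleFn γ (fun t => f t + ε * h t) = fun x => scaleFn γ f x + ε * scaleFn γ h x := by
  funext x; simp only [scaleFn]; ring

lemma MeasureTheory.Integrable.scaleFn {γ : ℝ} {g : ℝ → ℝ} (hg : Integrable g) (hγ : γ ≠ 0) :
    Integrable (scaleFn γ g) :=
  (hg.comp_div hγ).const_mul _

lemma HasCompactSupport.scaleFn {γ : ℝ} {g : ℝ → ℝ} (hg : HasCompactSupport g) (hγ : γ ≠ 0) :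
    HasCompactSupport (scaleFn γ g) := by
  have := hg.comp_smul (inv_ne_zero hγ)
  simp only [smul_eq_mul, ← div_eq_inv_mul] at this
  exact this.mul_left

lemma conv_add_mul {p f h : ℝ → ℝ} (ε : ℝ) {x : ℝ}
    (hf : Integrable (fun t => p t * f (x - t))) (hh : Integrable (fun t => p t * h (x - t))) :
    conv p (fun y => f y + ε * h y) x = conv p f x + ε * conv p h x := by
  simp only [conv, mul_add, mul_left_comm _ ε]
  rw [integral_add hf (hh.const_mul ε), integral_const_mul]

lemma integrable_conv {p q : ℝ → ℝ} (hp : Integrable p) (hq : Integrable q) :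
    Integrable (conv p q) :=
  hp.integrable_convolution (ContinuousLinearMap.mul ℝ ℝ) hq

theorem stmt_9_general (γ : ℝ) (hγ : 0 < γ) (f₁ f₂ h₂ : ℝ → ℝ)
    (hf₁int : ∫ x : ℝ, f₁ x = 1)
    (hf₂int : ∫ x : ℝ, f₂ x = 1)
    (hf₂pos : ∀ x, 0 < f₂ x)
    (hpos : ∀ x, 0 < conv f₁ (scaleFn γ f₂) x)
    (hlog₂ : Integrable (fun x : ℝ => f₂ x * Real.log (f₂ x)))
    (hlog : Integrable (fun x : ℝ =>
      conv f₁ (scaleFn γ f₂) x * Real.log (conv f₁ (scaleFn γ f₂) x)))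
    (hh₂ : Continuous h₂) (hh₂supp : HasCompactSupport h₂)
    (ε₀ : ℝ) (hε₀ : 0 < ε₀) (Φ Ψ : ℝ → ℝ) (hΦ : Integrable Φ) (hΨ : Integrable Ψ)
    (hdom₁ : ∀ x : ℝ, ∀ ε : ℝ, |ε| ≤ ε₀ →
      |conv f₁ (scaleFn γ h₂) x| *
        (1 + |Real.log (conv f₁ (scaleFn γ (fun t => f₂ t + ε * h₂ t)) x)|) +
      |h₂ x| * (1 + |Real.log (f₂ x + ε * h₂ x)|) ≤ Φ x)
    (hdom₂ : ∀ x : ℝ, ∀ ε : ℝ, |ε| ≤ ε₀ →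
      (conv f₁ (scaleFn γ h₂) x) ^ 2 /
          conv f₁ (scaleFn γ (fun t => f₂ t + ε * h₂ t)) x +
        (h₂ x) ^ 2 / (f₂ x + ε * h₂ x) ≤ Ψ x) :
    iteratedDeriv 2
      (fun ε : ℝ =>
        (-∫ x : ℝ,
          conv f₁ (scaleFn γ (fun t => f₂ t + ε * h₂ t)) x *
            Real.log (conv f₁ (scaleFn γ (fun t => f₂ t + ε * h₂ t)) x)) -
        (-∫ x : ℝ, (f₂ x + ε * h₂ x) * Real.log (f₂ x + ε * h₂ x))) 0 =
      ∫ x : ℝ,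
        ((h₂ x) ^ 2 / f₂ x -
          (conv f₁ (scaleFn γ h₂) x) ^ 2 / conv f₁ (scaleFn γ f₂) x) := by
  have hf₁ : Integrable f₁ := .of_integral_ne_zero (by simp [hf₁int])
  have hf₂ : Integrable f₂ := .of_integral_ne_zero (by simp [hf₂int])
  set a := conv f₁ (scaleFn γ f₂)
  set b := conv f₁ (scaleFn γ h₂)
  have hlin : ∀ ε, conv f₁ (scaleFn γ fun t => f₂ t + ε * h₂ t) = fun x => a x + ε * b x :=
    fun ε => funext fun x => by
      rw [scaleFn_add_mul]
      exact conv_add_mul ε (.of_integral_ne_zero (hpos x).ne')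
        ((hh₂supp.scaleFn hγ.ne').convolutionExists_right (ContinuousLinearMap.mul ℝ ℝ)
          hf₁.locallyIntegrable (by unfold scaleFn; fun_prop) x)
  simp only [hlin] at hdom₁ hdom₂ ⊢
  exact iteratedDeriv_two_integral_mul_log_sub hε₀
    (integrable_conv hf₁ (hf₂.scaleFn hγ.ne')).aestronglyMeasurable
    (integrable_conv hf₁
      ((hh₂.integrable_of_hasCompactSupport hh₂supp).scaleFn hγ.ne')).aestronglyMeasurable
    hf₂.aestronglyMeasurable hh₂.aestronglyMeasurable hpos hf₂pos hlog hlog₂ hΦ hΨ hdom₁ hdom₂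

/-- second-order variation of the entropy difference
`H^{f₁ ⋆ (f₂)_γ} − H^{f₂}` with a scaled component: under the stated
domination hypotheses, the second derivative at `ε = 0` of
`ε ↦ [−∫ (f₁ ⋆ (f₂ + εh₂)_γ)·log(f₁ ⋆ (f₂ + εh₂)_γ)] − [−∫ (f₂ + εh₂)·log(f₂ + εh₂)]`
equals `∫ ( h₂²/f₂ − (f₁ ⋆ (h₂)_γ)²/(f₁ ⋆ (f₂)_γ) )`. -/
theorem stmt_9 (γ : ℝ) (hγ : 0 < γ) (f₁ f₂ h₂ : ℝ → ℝ)
    (hf₁c : Continuous f₁) (hf₁nn : ∀ᵐ x : ℝ, 0 ≤ f₁ x) (hf₁int : ∫ x : ℝ, f₁ x = 1)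
    (hf₂c : Continuous f₂) (hf₂nn : ∀ᵐ x : ℝ, 0 ≤ f₂ x) (hf₂int : ∫ x : ℝ, f₂ x = 1)
    (hf₂pos : ∀ x, 0 < f₂ x)
    (hpos : ∀ x, 0 < conv f₁ (scaleFn γ f₂) x)
    (hlog₂ : Integrable (fun x : ℝ => f₂ x * Real.log (f₂ x)))
    (hlog : Integrable (fun x : ℝ =>
      conv f₁ (scaleFn γ f₂) x * Real.log (conv f₁ (scaleFn γ f₂) x)))
    (hh₂ : Continuous h₂) (hh₂supp : HasCompactSupport h₂)
    (ε₀ : ℝ) (hε₀ : 0 < ε₀) (Φ Ψ : ℝ → ℝ) (hΦ : Integrable Φ) (hΨ : Integrable Ψ)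
    (hdom₁ : ∀ x : ℝ, ∀ ε : ℝ, |ε| ≤ ε₀ →
      |conv f₁ (scaleFn γ h₂) x| *
        (1 + |Real.log (conv f₁ (scaleFn γ (fun t => f₂ t + ε * h₂ t)) x)|) +
      |h₂ x| * (1 + |Real.log (f₂ x + ε * h₂ x)|) ≤ Φ x)
    (hdom₂ : ∀ x : ℝ, ∀ ε : ℝ, |ε| ≤ ε₀ →
      (conv f₁ (scaleFn γ h₂) x) ^ 2 /
          conv f₁ (scaleFn γ (fun t => f₂ t + ε * h₂ t)) x +
        (h₂ x) ^ 2 / (f₂ x + ε * h₂ x) ≤ Ψ x) :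
    iteratedDeriv 2
      (fun ε : ℝ =>
        (-∫ x : ℝ,
          conv f₁ (scaleFn γ (fun t => f₂ t + ε * h₂ t)) x *
            Real.log (conv f₁ (scaleFn γ (fun t => f₂ t + ε * h₂ t)) x)) -
        (-∫ x : ℝ, (f₂ x + ε * h₂ x) * Real.log (f₂ x + ε * h₂ x))) 0 =
      ∫ x : ℝ,
        ((h₂ x) ^ 2 / f₂ x -
          (conv f₁ (scaleFn γ h₂) x) ^ 2 / conv f₁ (scaleFn γ f₂) x) :=
  stmt_9_general γ hγ f₁ f₂ h₂ hf₁int hf₂int hf₂pos hpos hlog₂ hlog hh₂ hh₂supp ε₀ hε₀ Φ Ψ hΦ hΨ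
    hdom₁ hdom₂
end

section
/- First-order variation of the mutual-information functional with Gaussian noise: let σ² > 0, let n = φ_{σ²} be the centered Gaussian density of variance σ², let f₁, f₂ : ℝ → ℝ be continuous probability densities such that (f₁ ⋆ f₂ ⋆ n)(x) > 0 and (f₂ ⋆ n)(x) > 0 for all x, with x ↦ (f₁ ⋆ f₂ ⋆ n)(x)·log((f₁ ⋆ f₂ ⋆ n)(x)) and x ↦ (f₂ ⋆ n)(x)·log((f₂ ⋆ n)(x)) integrable, and let h₂ : ℝ → ℝ be continuous with compact support. Under a domination hypothesis (there exist ε₀ > 0 and integrable Φ with |(f₁ ⋆ h₂ ⋆ n)(x)|·(1 + |log((f₁ ⋆ (f₂ + ε·h₂) ⋆ n)(x))|) + |(h₂ ⋆ n)(x)|·(1 + |log(((f₂ + ε·h₂) ⋆ n)(x))|) ≤ Φ(x) for all x and |ε| ≤ ε₀), the function ε ↦ [−∫ (f₁ ⋆ (f₂ + ε·h₂) ⋆ n)·log(f₁ ⋆ (f₂ + ε·h₂) ⋆ n)] − [−∫ ((f₂ + ε·h₂) ⋆ n)·log((f₂ + ε·h₂) ⋆ n)] has derivative at ε = 0 equal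 to −∫ (f₁ ⋆ h₂ ⋆ n)(x)·(log((f₁ ⋆ f₂ ⋆ n)(x)) + 1) dx + ∫ (h₂ ⋆ n)(x)·(log((f₂ ⋆ n)(x)) + 1) dx. -/
open MeasureTheory

/-- The centered Gaussian density of variance `v`. -/
noncomputable def gaussianDensity (v : ℝ) (x : ℝ) : ℝ :=
  (Real.sqrt (2 * Real.pi * v))⁻¹ * Real.exp (-(x ^ 2) / (2 * v))

/-!
By linearity of convolution, `f₁ ⋆ (f₂ + ε h₂) ⋆ n = A + ε B` and `(f₂ + ε h₂) ⋆ n = C + ε D` with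
`A, B, C, D` continuous (the Gaussian is bounded and continuous). Each entropy term is therefore
`∫ (P + ε Q) log (P + ε Q)`, whose `ε`-derivative `Q (log (P + ε Q) + 1)` is dominated by `Φ`, so
one may differentiate under the integral sign. The same domination keeps `P + ε Q` away from `0`,
where `u ↦ u log u` is not differentiable.
-/

open Real Filter

section Convolution

variable {g h k l : ℝ → ℝ} {M : ℝ}

lemma integrable_mul_comp_sub (hg : Integrable g) (hk : Continuous k) (hkM : ∀ y, |k y| ≤ M)
    (x : ℝ) : Integrable fun t => g t * k (x - t) :=
  hg.mul_bdd (by fun_prop) (ae_of_all _ fun t => hkM (x - t))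

lemma abs_conv_le (hg : Integrable g) (hkM : ∀ y, |k y| ≤ M) (x : ℝ) :
    |conv g k x| ≤ (∫ t, |g t|) * M :=
  calc |conv g k x| ≤ ∫ t, |g t * k (x - t)| := abs_integral_le_integral_abs
    _ ≤ ∫ t, |g t| * M := by
        refine integral_mono_of_nonneg (ae_of_all _ fun t => abs_nonneg _) (hg.abs.mul_const M)
          (ae_of_all _ fun t => ?_)
        simp only [abs_mul]
        exact mul_le_mul_of_nonneg_left (hkM _) (abs_nonneg _)
    _ = (∫ t, |g t|) * M := integral_mul_const _ _

lemma continuous_conv (hg : Integrable g) (hk : Continuous k) (hkM : ∀ y, |k y| ≤ M) :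
    Continuous (conv g k) :=
  BddAbove.continuous_convolution_right_of_integrable (L := ContinuousLinearMap.mul ℝ ℝ)
    ⟨M, by rintro _ ⟨y, rfl⟩; exact hkM y⟩ hg hk

lemma conv_add_mul_left (hg : Integrable g) (hh : Integrable h) (hk : Continuous k)
    (hkM : ∀ y, |k y| ≤ M) (ε : ℝ) :
    conv (fun t => g t + ε * h t) k = fun x => conv g k x + ε * conv h k x := by
  ext x
  simp only [conv, add_mul, mul_assoc]
  rw [integral_add (integrable_mul_comp_sub hg hk hkM x)
    ((integrable_mul_comp_sub hh hk hkM x).const_mul ε), integral_const_mul]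

lemma conv_add_mul_right {M' : ℝ} (hg : Integrable g) (hk : Continuous k) (hkM : ∀ y, |k y| ≤ M)
    (hl : Continuous l) (hlM : ∀ y, |l y| ≤ M') (ε : ℝ) :
    conv g (fun y => k y + ε * l y) = fun x => conv g k x + ε * conv g l x := by
  ext x
  simp only [conv, mul_add, mul_left_comm _ ε]
  rw [integral_add (integrable_mul_comp_sub hg hk hkM x)
    ((integrable_mul_comp_sub hg hl hlM x).const_mul ε), integral_const_mul]

end Convolution

lemma continuous_gaussianDensity (v : ℝ) : Continuous (gaussianDensity v) := by
  unfold gaussianDensity; fun_prop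

lemma abs_gaussianDensity_le {v : ℝ} (hv : 0 ≤ v) (x : ℝ) :
    |gaussianDensity v x| ≤ (√(2 * π * v))⁻¹ := by
  have hexp : exp (-x ^ 2 / (2 * v)) ≤ 1 :=
    exp_le_one_iff.2 (div_nonpos_of_nonpos_of_nonneg (by nlinarith) (by positivity))
  rw [gaussianDensity, abs_of_nonneg (by positivity)]
  exact mul_le_of_le_one_right (by positivity) hexp

/- Since `log 0 = 0`, the bound does not exclude a zero by itself; but if the path vanished at
some `ε`, then `a + ε' * b` would run through every `c ∈ (0, a]` for `|ε'| ≤ |ε|`, and `|log c|`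
is unbounded there. -/
lemma add_mul_ne_zero_of_abs_log_le {a b φ ε₀ : ℝ} (ha : 0 < a)
    (hbound : ∀ ε, |ε| ≤ ε₀ → |b| * (1 + |log (a + ε * b)|) ≤ φ) {ε : ℝ} (hε : |ε| ≤ ε₀) :
    a + ε * b ≠ 0 := by
  intro hzero
  have hb : 0 < |b| := abs_pos.2 fun hb => by simp [hb] at hzero; linarith
  set c := min a (exp (-(φ / |b|)))
  have hc : 0 < c := lt_min ha (exp_pos _)
  have hca : c / a ≤ 1 := (div_le_one ha).2 (min_le_left _ _)
  have hpath : a + (ε * (1 - c / a)) * b = c := by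
    field_simp
    linear_combination a * hzero - c * hzero
  have hε' : |ε * (1 - c / a)| ≤ ε₀ := by
    rw [abs_mul, abs_of_nonneg (a := 1 - c / a) (by linarith)]
    exact (mul_le_of_le_one_right (abs_nonneg _) (by linarith [div_pos hc ha])).trans hε
  have hlog : log c ≤ -(φ / |b|) :=
    (log_le_log hc (min_le_right _ _)).trans (log_exp _).le
  have hφ : φ ≤ |b| * |log c| :=
    (div_le_iff₀' hb).1 ((le_neg.1 hlog).trans (neg_le_abs _))
  have hcbound := hbound _ hε'
  rw [hpath] at hcbound
  nlinarith

theorem hasDerivAt_integral_mul_log_add_mul_s10 {P Q Φ : ℝ → ℝ} {ε₀ : ℝ} (hε₀ : 0 < ε₀)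
    (hP : AEMeasurable P) (hQ : AEMeasurable Q) (hPpos : ∀ᵐ x, 0 < P x)
    (hPlog : Integrable fun x => P x * log (P x)) (hΦ : Integrable Φ)
    (hbound : ∀ᵐ x, ∀ ε, |ε| ≤ ε₀ → |Q x| * (1 + |log (P x + ε * Q x)|) ≤ Φ x) :
    HasDerivAt (fun ε => ∫ x, (P x + ε * Q x) * log (P x + ε * Q x))
      (∫ x, Q x * (log (P x) + 1)) 0 := by
  have hball : ∀ ε ∈ Metric.ball (0 : ℝ) ε₀, |ε| ≤ ε₀ := fun ε hε =>
    (mem_ball_zero_iff.1 hε).le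
  have key := hasDerivAt_integral_of_dominated_loc_of_deriv_le (Metric.ball_mem_nhds 0 hε₀)
    (F := fun ε x => (P x + ε * Q x) * log (P x + ε * Q x))
    (F' := fun ε x => Q x * (log (P x + ε * Q x) + 1)) (bound := Φ)
    (Eventually.of_forall fun ε => by fun_prop) (by simpa using hPlog) (by fun_prop) ?_ hΦ ?_
  · simpa using key.2
  · filter_upwards [hbound] with x hx ε hε
    calc ‖Q x * (log (P x + ε * Q x) + 1)‖ ≤ |Q x| * (1 + |log (P x + ε * Q x)|) := by
          rw [norm_mul, norm_eq_abs, norm_eq_abs, add_comm 1]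
          exact mul_le_mul_of_nonneg_left (abs_add_le _ _ |>.trans_eq (by rw [abs_one]))
            (abs_nonneg _)
      _ ≤ Φ x := hx ε (hball ε hε)
  · filter_upwards [hPpos, hbound] with x hx hxbound ε hε
    have hne := add_mul_ne_zero_of_abs_log_le hx hxbound (hball ε hε)
    have hpath : HasDerivAt (fun ε => P x + ε * Q x) (Q x) ε := by
      simpa using ((hasDerivAt_id ε).mul_const (Q x)).const_add (P x)
    exact ((hasDerivAt_mul_log hne).comp ε hpath).congr_deriv (mul_comm _ _)

theorem stmt_10_general (σ2 : ℝ) (hσ2 : 0 < σ2) (f₁ f₂ h₂ : ℝ → ℝ)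
    (n : ℝ → ℝ) (hn : n = gaussianDensity σ2)
    (hf₁int : ∫ x : ℝ, f₁ x = 1)
    (hf₂int : ∫ x : ℝ, f₂ x = 1)
    (hpos₁ : ∀ x, 0 < conv f₁ (conv f₂ n) x)
    (hpos₂ : ∀ x, 0 < conv f₂ n x)
    (hlog₁ : Integrable (fun x : ℝ =>
      conv f₁ (conv f₂ n) x * Real.log (conv f₁ (conv f₂ n) x)))
    (hlog₂ : Integrable (fun x : ℝ => conv f₂ n x * Real.log (conv f₂ n x)))
    (hh₂ : Continuous h₂) (hh₂supp : HasCompactSupport h₂)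
    (ε₀ : ℝ) (hε₀ : 0 < ε₀) (Φ : ℝ → ℝ) (hΦ : Integrable Φ)
    (hdom : ∀ x : ℝ, ∀ ε : ℝ, |ε| ≤ ε₀ →
      |conv f₁ (conv h₂ n) x| *
        (1 + |Real.log (conv f₁ (conv (fun t => f₂ t + ε * h₂ t) n) x)|) +
      |conv h₂ n x| *
        (1 + |Real.log (conv (fun t => f₂ t + ε * h₂ t) n x)|) ≤ Φ x) :
    HasDerivAt
      (fun ε : ℝ =>
        (-∫ x : ℝ,
          conv f₁ (conv (fun t => f₂ t + ε * h₂ t) n) x *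
            Real.log (conv f₁ (conv (fun t => f₂ t + ε * h₂ t) n) x)) -
        (-∫ x : ℝ,
          conv (fun t => f₂ t + ε * h₂ t) n x *
            Real.log (conv (fun t => f₂ t + ε * h₂ t) n x)))
      ((-∫ x : ℝ, conv f₁ (conv h₂ n) x * (Real.log (conv f₁ (conv f₂ n) x) + 1)) +
        ∫ x : ℝ, conv h₂ n x * (Real.log (conv f₂ n x) + 1)) 0 := by
  have hf₁ : Integrable f₁ := .of_integral_ne_zero (by simp [hf₁int])
  have hf₂ : Integrable f₂ := .of_integral_ne_zero (by simp [hf₂int])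
  have hh₂int : Integrable h₂ := hh₂.integrable_of_hasCompactSupport hh₂supp
  have hnc : Continuous n := hn ▸ continuous_gaussianDensity σ2
  have hnM := hn ▸ abs_gaussianDensity_le hσ2.le
  have hCc := continuous_conv hf₂ hnc hnM
  have hCM := abs_conv_le hf₂ hnM
  have hDc := continuous_conv hh₂int hnc hnM
  have hDM := abs_conv_le hh₂int hnM
  have hlin₂ := conv_add_mul_left hf₂ hh₂int hnc hnM
  have hlin₁ := conv_add_mul_right hf₁ hCc hCM hDc hDM
  simp only [hlin₂, hlin₁] at hdom ⊢
  have hderiv₁ := hasDerivAt_integral_mul_log_add_mul_s10 hε₀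
    (continuous_conv hf₁ hCc hCM).aemeasurable (continuous_conv hf₁ hDc hDM).aemeasurable
    (ae_of_all _ hpos₁) hlog₁ hΦ (ae_of_all _ fun x ε hε =>
      (le_add_of_nonneg_right (by positivity)).trans (hdom x ε hε))
  have hderiv₂ := hasDerivAt_integral_mul_log_add_mul_s10 hε₀ hCc.aemeasurable hDc.aemeasurable
    (ae_of_all _ hpos₂) hlog₂ hΦ (ae_of_all _ fun x ε hε =>
      (le_add_of_nonneg_left (by positivity)).trans (hdom x ε hε))
  exact (hderiv₁.neg.sub hderiv₂.neg).congr_deriv (by ring)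

/-- first-order variation of the mutual-information functional
`H^{f₁⋆f₂⋆n} − H^{f₂⋆n}` with Gaussian noise `n = φ_{σ²}`: under the stated
domination hypothesis, the map
`ε ↦ [−∫ (f₁ ⋆ (f₂+εh₂) ⋆ n)·log(f₁ ⋆ (f₂+εh₂) ⋆ n)] − [−∫ ((f₂+εh₂) ⋆ n)·log((f₂+εh₂) ⋆ n)]`
has derivative
`−∫ (f₁ ⋆ h₂ ⋆ n)·(log(f₁ ⋆ f₂ ⋆ n) + 1) + ∫ (h₂ ⋆ n)·(log(f₂ ⋆ n) + 1)`
at `ε = 0`. -/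
theorem stmt_10 (σ2 : ℝ) (hσ2 : 0 < σ2) (f₁ f₂ h₂ : ℝ → ℝ)
    (n : ℝ → ℝ) (hn : n = gaussianDensity σ2)
    (hf₁c : Continuous f₁) (hf₁nn : ∀ᵐ x : ℝ, 0 ≤ f₁ x) (hf₁int : ∫ x : ℝ, f₁ x = 1)
    (hf₂c : Continuous f₂) (hf₂nn : ∀ᵐ x : ℝ, 0 ≤ f₂ x) (hf₂int : ∫ x : ℝ, f₂ x = 1)
    (hpos₁ : ∀ x, 0 < conv f₁ (conv f₂ n) x)
    (hpos₂ : ∀ x, 0 < conv f₂ n x)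
    (hlog₁ : Integrable (fun x : ℝ =>
      conv f₁ (conv f₂ n) x * Real.log (conv f₁ (conv f₂ n) x)))
    (hlog₂ : Integrable (fun x : ℝ => conv f₂ n x * Real.log (conv f₂ n x)))
    (hh₂ : Continuous h₂) (hh₂supp : HasCompactSupport h₂)
    (ε₀ : ℝ) (hε₀ : 0 < ε₀) (Φ : ℝ → ℝ) (hΦ : Integrable Φ)
    (hdom : ∀ x : ℝ, ∀ ε : ℝ, |ε| ≤ ε₀ →
      |conv f₁ (conv h₂ n) x| *
        (1 + |Real.log (conv f₁ (conv (fun t => f₂ t + ε * h₂ t) n) x)|) +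
      |conv h₂ n x| *
        (1 + |Real.log (conv (fun t => f₂ t + ε * h₂ t) n x)|) ≤ Φ x) :
    HasDerivAt
      (fun ε : ℝ =>
        (-∫ x : ℝ,
          conv f₁ (conv (fun t => f₂ t + ε * h₂ t) n) x *
            Real.log (conv f₁ (conv (fun t => f₂ t + ε * h₂ t) n) x)) -
        (-∫ x : ℝ,
          conv (fun t => f₂ t + ε * h₂ t) n x *
            Real.log (conv (fun t => f₂ t + ε * h₂ t) n x)))
      ((-∫ x : ℝ, conv f₁ (conv h₂ n) x * (Real.log (conv f₁ (conv f₂ n) x) + 1)) +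
        ∫ x : ℝ, conv h₂ n x * (Real.log (conv f₂ n x) + 1)) 0 :=
  stmt_10_general σ2 hσ2 f₁ f₂ h₂ n hn hf₁int hf₂int hpos₁ hpos₂ hlog₁ hlog₂ hh₂ hh₂supp ε₀ hε₀ Φ hΦ
    hdom
end
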